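/- arXiv:1608.05226 — 3 statements merged into one kernel-verified Lean document; each statement's English description precedes it below -/
import Mathlib

section
/- Let α > 0, σ > 0, f₀ ∈ ℝ, g₀ ≥ f₀². Define V(t) := g(t) − f(t)² where f, g solve the moment ODEs f'(t) = h(t) + α f(t) − γ(g(t) − f(t)²) (for any continuous h and γ ≥ 0) and g'(t) = 2α g(t) + 2f(t)(f'(t) − α f(t)) + σ², with f(0)=f₀, g(0)=g₀. Then V(t) = (g₀ − f₀²)·e^{2αt} + (σ²/(2α))·(e^{2αt} − 1); in particular the variance V(t) does not depend on h or γ. -/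
open Real Set

/-- For the moment ODEs `f'(t) = h(t) + α f(t) − γ(g(t) − f(t)²)` (any continuous `h`, `γ ≥ 0`)
and `g'(t) = 2α g(t) + 2f(t)(f'(t) − α f(t)) + σ²`, with `f(0)=f₀`, `g(0)=g₀ ≥ f₀²`, the
variance `V(t) := g(t) − f(t)²` equals `(g₀ − f₀²)·e^{2αt} + (σ²/(2α))·(e^{2αt} − 1)`;
in particular it does not depend on `h` or `γ`. -/
theorem stmt5 (α σ T f₀ g₀ γ : ℝ) (hα : 0 < α) (hσ : 0 < σ) (hT : 0 < T)
    (hg₀ : f₀ ^ 2 ≤ g₀) (hγ : 0 ≤ γ)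
    (h : ℝ → ℝ) (hh : Continuous h) (f g : ℝ → ℝ)
    (hf : ∀ t ∈ Set.Icc (0 : ℝ) T,
      HasDerivAt f (h t + α * f t - γ * (g t - (f t) ^ 2)) t)
    (hg : ∀ t ∈ Set.Icc (0 : ℝ) T,
      HasDerivAt g (2 * α * g t
        + 2 * f t * ((h t + α * f t - γ * (g t - (f t) ^ 2)) - α * f t) + σ ^ 2) t)
    (hf0 : f 0 = f₀) (hg0 : g 0 = g₀) :
    ∀ t ∈ Set.Icc (0 : ℝ) T,
      g t - (f t) ^ 2
        = (g₀ - f₀ ^ 2) * Real.exp (2 * α * t)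
          + (σ ^ 2 / (2 * α)) * (Real.exp (2 * α * t) - 1) := by
  intro t ht
  set c : ℝ := σ ^ 2 / (2 * α) with hc
  set W : ℝ → ℝ := fun s => (g s - (f s) ^ 2 + c) * Real.exp (-(2 * α * s)) with hW
  have hWd : ∀ s ∈ Set.Icc (0 : ℝ) T, HasDerivAt W 0 s := by
    intro s hs
    have hV : HasDerivAt (fun s => g s - (f s) ^ 2 + c)
        (2 * α * (g s - (f s) ^ 2) + σ ^ 2) s := by
      have := ((hg s hs).sub (((hf s hs).pow 2))).add_const c
      exact this.congr_deriv (by ring)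
    have hE : HasDerivAt (fun s => Real.exp (-(2 * α * s)))
        (Real.exp (-(2 * α * s)) * (-(2 * α))) s := by
      have : HasDerivAt (fun s : ℝ => -(2 * α * s)) (-(2 * α)) s := by
        exact (((hasDerivAt_id s).const_mul (2 * α)).neg).congr_deriv (by ring)
      exact this.exp
    have := hV.mul hE
    have hα' : (2 * α) ≠ 0 := by positivity
    refine this.congr_deriv ?_
    rw [hc]
    field_simp
    ring
  have hWc : ∀ s ∈ Set.Icc (0 : ℝ) T, W s = W 0 := by
    have hcont : ContinuousOn W (Set.Icc 0 T) := fun s hs => ((hWd s hs).continuousAt).continuousWithinAt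
    intro s hs
    exact constant_of_has_deriv_right_zero hcont
      (fun x hx => ((hWd x (Set.mem_Icc_of_Ico hx)).hasDerivWithinAt)) s hs
  have h0 : W t = g₀ - f₀ ^ 2 + c := by
    rw [hWc t ht]
    simp [hW, hf0, hg0]
  have hexp : Real.exp (-(2 * α * t)) ≠ 0 := Real.exp_ne_zero _
  have : g t - (f t) ^ 2 + c = (g₀ - f₀ ^ 2 + c) * Real.exp (2 * α * t) := by
    have := h0
    rw [hW] at this
    beta_reduce at this
    have h2 : Real.exp (2 * α * t) * Real.exp (-(2 * α * t)) = 1 := by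
      rw [← Real.exp_add]; simp
    calc g t - f t ^ 2 + c = (g t - f t ^ 2 + c) * (Real.exp (2 * α * t) * Real.exp (-(2 * α * t))) := by rw [h2]; ring
    _ = ((g t - f t ^ 2 + c) * Real.exp (-(2 * α * t))) * Real.exp (2 * α * t) := by ring
    _ = (g₀ - f₀ ^ 2 + c) * Real.exp (2 * α * t) := by rw [this]
  linarith [this]
end

section
/- Let N ≥ 1, κ := α + β₁ > 0, c > 0, σ > 0, and let W^N be an N-dimensional Brownian motion. Define S_t := (1/N)·Σᵢ Xᵢ_t where X solves dX_t = (a(t)·𝟙_N + B_N·X_t) dt + σ dW^N_t with a(t) := e^{κ(T−t)}/c and B_N = α·I_N + (β₁/N)·𝟙_{N,N}. Then S satisfies dS_t = (a(t) + κ·S_t) dt + (σ/N)·𝟙_N·dW^N_t, and hence S_t = S₀·e^{κt} + (1/(2κc))·(e^{κ(T+t)} − e^{κ(T−t)}) + σ·∫₀ᵗ e^{κ(t−s)}·(1/N)·𝟙_N·dW^N_s. -/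
open Real Set MeasureTheory ProbabilityTheory intervalIntegral BigOperators

/-- A standard one-dimensional Brownian motion: starts at `0`, has continuous paths,
Gaussian increments `W_t − W_s ∼ N(0, t−s)`, and independent increments. -/
def IsStdBrownian {Ω : Type*} [MeasurableSpace Ω] (P : Measure Ω) (W : ℝ → Ω → ℝ) : Prop :=
  (∀ ω, W 0 ω = 0) ∧
  (∀ t, Measurable (W t)) ∧
  (∀ ω, Continuous fun t => W t ω) ∧
  (∀ s t : ℝ, 0 ≤ s → s ≤ t →
    P.map (fun ω => W t ω - W s ω) = gaussianReal 0 (Real.toNNReal (t - s))) ∧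
  (∀ (n : ℕ) (u : Fin (n + 1) → ℝ), Monotone u →
    iIndepFun
      (fun (i : Fin n) ω => W (u i.succ) ω - W (u i.castSucc) ω) P)

/-- The empirical mean `S_t = (1/N)Σᵢ Xᵢ_t` of the `N` outputs
`dXᵢ_t = (a(t) + α Xᵢ_t + (β₁/N)Σⱼ Xⱼ_t)dt + σ dWⁱ_t`, `a(t) = e^{κ(T−t)}/c`, `κ = α+β₁`,
satisfies `dS_t = (a(t) + κ S_t)dt + (σ/N)𝟙_N·dW^N_t` and hence
`S_t = S₀ e^{κt} + (1/(2κc))(e^{κ(T+t)} − e^{κ(T−t)}) + σ∫₀ᵗ e^{κ(t−s)}(1/N)𝟙_N·dW^N_s`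
(the stochastic integral written pathwise via integration by parts). -/
theorem stmt12 {Ω : Type*} [MeasurableSpace Ω] (P : Measure Ω) [IsProbabilityMeasure P]
    (N : ℕ) (hN : 1 ≤ N) (α β₁ c σ T : ℝ) (hκ : 0 < α + β₁) (hc : 0 < c) (hσ : 0 < σ)
    (hT : 0 < T)
    (W : Fin N → ℝ → Ω → ℝ) (hW : ∀ i, IsStdBrownian P (W i))
    (hWindep : iIndepFun
      (fun (i : Fin N) ω => fun t => W i t ω) P)
    (ψ : Fin N → ℝ)
    (X : ℝ → Ω → Fin N → ℝ) (hXc : ∀ ω i, Continuous fun t => X t ω i)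
    (hX : ∀ ω, ∀ i, ∀ t ∈ Set.Icc (0 : ℝ) T,
      X t ω i = ψ i
        + (∫ s in (0 : ℝ)..t,
            (Real.exp ((α + β₁) * (T - s)) / c + α * X s ω i
              + (β₁ / N) * ∑ j, X s ω j))
        + σ * W i t ω)
    (S : ℝ → Ω → ℝ) (hS : ∀ t ω, S t ω = (1 / (N : ℝ)) * ∑ i, X t ω i)
    (B : ℝ → Ω → ℝ) (hB : ∀ t ω, B t ω = (1 / (N : ℝ)) * ∑ i, W i t ω) :
    (∀ ω, ∀ t ∈ Set.Icc (0 : ℝ) T,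
      S t ω = S 0 ω
        + (∫ s in (0 : ℝ)..t,
            (Real.exp ((α + β₁) * (T - s)) / c + (α + β₁) * S s ω))
        + σ * B t ω) ∧
    (∀ ω, ∀ t ∈ Set.Icc (0 : ℝ) T,
      S t ω = S 0 ω * Real.exp ((α + β₁) * t)
        + (1 / (2 * (α + β₁) * c))
            * (Real.exp ((α + β₁) * (T + t)) - Real.exp ((α + β₁) * (T - t)))
        + σ * (B t ω
            + (α + β₁) * ∫ s in (0 : ℝ)..t, Real.exp ((α + β₁) * (t - s)) * B s ω)) := by

  have hNpos : (0:ℝ) < N := by exact_mod_cast hN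
  have hNne : (N:ℝ) ≠ 0 := ne_of_gt hNpos
  have hκne : α + β₁ ≠ 0 := ne_of_gt hκ
  have hcne : c ≠ 0 := ne_of_gt hc
  set κ := α + β₁ with hκdef
  -- continuity facts
  have hScont : ∀ ω, Continuous fun t => S t ω := by
    intro ω
    have : (fun t => S t ω) = fun t => (1 / (N:ℝ)) * ∑ i, X t ω i := by
      funext t; exact hS t ω
    rw [this]
    exact continuous_const.mul (continuous_finset_sum _ fun i _ => hXc ω i)
  have hBcont : ∀ ω, Continuous fun t => B t ω := by
    intro ω
    have : (fun t => B t ω) = fun t => (1 / (N:ℝ)) * ∑ i, W i t ω := by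
      funext t; exact hB t ω
    rw [this]
    exact continuous_const.mul (continuous_finset_sum _ fun i _ => (hW i).2.2.1 ω)
  have hB0 : ∀ ω, B 0 ω = 0 := by
    intro ω
    rw [hB]
    simp [fun i => (hW i).1 ω]
  -- Part 1
  have part1 : ∀ ω, ∀ t ∈ Set.Icc (0 : ℝ) T,
      S t ω = S 0 ω
        + (∫ s in (0 : ℝ)..t, (Real.exp (κ * (T - s)) / c + κ * S s ω))
        + σ * B t ω := by
    intro ω t ht
    have hfi : ∀ i : Fin N, Continuous (fun s => Real.exp (κ * (T - s)) / c + α * X s ω i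
        + (β₁ / N) * ∑ j, X s ω j) := by
      intro i
      exact (((Real.continuous_exp.comp (continuous_const.mul (continuous_const.sub continuous_id))).div_const c).add
        (continuous_const.mul (hXc ω i))).add
        (continuous_const.mul (continuous_finset_sum _ fun j _ => hXc ω j))
    have hsum : ∀ s : ℝ, (∑ i : Fin N, (Real.exp (κ * (T - s)) / c + α * X s ω i
        + (β₁ / N) * ∑ j, X s ω j))
        = (N:ℝ) * (Real.exp (κ * (T - s)) / c + κ * S s ω) := by
      intro s
      rw [Finset.sum_add_distrib, Finset.sum_add_distrib, Finset.sum_const, Finset.sum_const,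
        ← Finset.mul_sum, Finset.card_univ, Fintype.card_fin, hS s ω, hκdef]
      push_cast
      field_simp
      ring_nf
      linear_combination (c * β₁ * ∑ i, X s ω i) * mul_inv_cancel₀ hNne
        + (rexp (α * T - α * s + β₁ * T - β₁ * s) * ↑N) * mul_inv_cancel₀ hcne
    have hXsum : ∑ i, X t ω i = ∑ i, (ψ i
        + (∫ s in (0 : ℝ)..t, (Real.exp (κ * (T - s)) / c + α * X s ω i
            + (β₁ / N) * ∑ j, X s ω j))
        + σ * W i t ω) := Finset.sum_congr rfl fun i _ => hX ω i t ht
    have hS0 : S 0 ω = (1 / (N:ℝ)) * ∑ i, ψ i := by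
      rw [hS 0 ω]
      congr 1
      refine Finset.sum_congr rfl fun i _ => ?_
      rw [hX ω i 0 ⟨le_refl 0, hT.le⟩, intervalIntegral.integral_same, (hW i).1 ω]
      ring
    rw [hS t ω, hXsum, Finset.sum_add_distrib, Finset.sum_add_distrib,
      ← intervalIntegral.integral_finset_sum (fun i _ => (hfi i).intervalIntegrable 0 t)]
    have : (∫ s in (0:ℝ)..t, ∑ i : Fin N, (Real.exp (κ * (T - s)) / c + α * X s ω i
        + (β₁ / N) * ∑ j, X s ω j))
        = (N:ℝ) * ∫ s in (0:ℝ)..t, (Real.exp (κ * (T - s)) / c + κ * S s ω) := by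
      rw [← intervalIntegral.integral_const_mul]
      exact intervalIntegral.integral_congr fun s _ => hsum s
    rw [this, hS0, hB t ω, ← Finset.mul_sum]
    field_simp
  refine ⟨part1, ?_⟩
  -- Part 2
  intro ω t ht
  obtain ⟨ht0, htT⟩ := ht
  have hacont : Continuous (fun s : ℝ => Real.exp (κ * (T - s)) / c) :=
    (Real.continuous_exp.comp (continuous_const.mul (continuous_const.sub continuous_id))).div_const c
  have hgcont : Continuous (fun s => Real.exp (κ * (T - s)) / c + κ * S s ω) :=
    hacont.add (continuous_const.mul (hScont ω))
  set Y : ℝ → ℝ := fun u => S 0 ω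
      + ∫ s in (0:ℝ)..u, (Real.exp (κ * (T - s)) / c + κ * S s ω) with hYdef
  have hYeq : ∀ u ∈ Set.Icc (0:ℝ) T, Y u = S u ω - σ * B u ω := by
    intro u hu
    have h := part1 ω u hu
    rw [hYdef]
    simp only
    linarith
  have hYderiv : ∀ u : ℝ, HasDerivAt Y (Real.exp (κ * (T - u)) / c + κ * S u ω) u := by
    intro u
    have h := intervalIntegral.integral_hasDerivAt_right
      (hgcont.intervalIntegrable 0 u)
      (hgcont.stronglyMeasurableAtFilter volume (nhds u))
      hgcont.continuousAt
    exact h.const_add _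
  -- integrating factor
  have key : ∀ u ∈ Set.uIcc (0:ℝ) t,
      HasDerivAt (fun v => Real.exp (-(κ * v)) * Y v)
        (Real.exp (-(κ * u)) * (Real.exp (κ * (T - u)) / c + κ * σ * B u ω)) u := by
    intro u hu
    rw [Set.uIcc_of_le ht0] at hu
    have hu' : u ∈ Set.Icc (0:ℝ) T := ⟨hu.1, hu.2.trans htT⟩
    have h1 : HasDerivAt (fun v : ℝ => -(κ * v)) (-κ) u := by
      simpa [neg_mul] using (hasDerivAt_id u).const_mul (-κ)
    have h2 : HasDerivAt (fun v => Real.exp (-(κ * v))) (Real.exp (-(κ * u)) * (-κ)) u := h1.exp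
    have h3 := h2.mul (hYderiv u)
    refine h3.congr_deriv ?_
    rw [hYeq u hu']
    ring
  have hcontint : Continuous (fun s : ℝ =>
      Real.exp (-(κ * s)) * (Real.exp (κ * (T - s)) / c + κ * σ * B s ω)) :=
    (Real.continuous_exp.comp (continuous_const.mul continuous_id).neg).mul
      (hacont.add (continuous_const.mul (hBcont ω)))
  have hInt := intervalIntegral.integral_eq_sub_of_hasDerivAt key
    (hcontint.intervalIntegrable 0 t)
  have hY0 : Y 0 = S 0 ω := by
    rw [hYdef]; simp
  -- split the integral
  have hca : Continuous (fun s : ℝ => Real.exp (-(κ * s)) * (Real.exp (κ * (T - s)) / c)) :=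
    (Real.continuous_exp.comp (continuous_const.mul continuous_id).neg).mul hacont
  have hcb : Continuous (fun s : ℝ => Real.exp (-(κ * s)) * B s ω) :=
    (Real.continuous_exp.comp (continuous_const.mul continuous_id).neg).mul (hBcont ω)
  have hsplit : (∫ s in (0:ℝ)..t,
        Real.exp (-(κ * s)) * (Real.exp (κ * (T - s)) / c + κ * σ * B s ω))
      = (∫ s in (0:ℝ)..t, Real.exp (-(κ * s)) * (Real.exp (κ * (T - s)) / c))
        + κ * σ * ∫ s in (0:ℝ)..t, Real.exp (-(κ * s)) * B s ω := by
    rw [← intervalIntegral.integral_const_mul,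
      ← intervalIntegral.integral_add (g := fun s => κ * σ * (Real.exp (-(κ * s)) * B s ω))
        (hca.intervalIntegrable 0 t)
        ((continuous_const.mul hcb).intervalIntegrable 0 t)]
    exact intervalIntegral.integral_congr fun s _ => by ring
  -- explicit a-integral
  have hFa : ∀ s : ℝ, HasDerivAt (fun u => -(1 / (2 * κ * c)) * Real.exp (κ * T - 2 * κ * u))
      (Real.exp (-(κ * s)) * (Real.exp (κ * (T - s)) / c)) s := by
    intro s
    have h1 : HasDerivAt (fun u : ℝ => κ * T - 2 * κ * u) (-(2 * κ)) s := by
      simpa using ((hasDerivAt_id s).const_mul (2 * κ)).const_sub (κ * T)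
    have h2 := (h1.exp).const_mul (-(1 / (2 * κ * c)))
    refine h2.congr_deriv ?_
    rw [← mul_div_assoc, ← Real.exp_add,
      show -(κ * s) + κ * (T - s) = κ * T - 2 * κ * s from by ring]
    field_simp
  have hIa : (∫ s in (0:ℝ)..t, Real.exp (-(κ * s)) * (Real.exp (κ * (T - s)) / c))
      = -(1 / (2 * κ * c)) * Real.exp (κ * T - 2 * κ * t)
        + (1 / (2 * κ * c)) * Real.exp (κ * T) := by
    rw [intervalIntegral.integral_eq_sub_of_hasDerivAt (fun s _ => hFa s)
      (hca.intervalIntegrable 0 t)]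
    ring_nf
  -- rewrite the B-integral in the goal
  have hBI : (∫ s in (0:ℝ)..t, Real.exp (κ * (t - s)) * B s ω)
      = Real.exp (κ * t) * ∫ s in (0:ℝ)..t, Real.exp (-(κ * s)) * B s ω := by
    rw [← intervalIntegral.integral_const_mul]
    refine intervalIntegral.integral_congr fun s _ => ?_
    rw [← mul_assoc, ← Real.exp_add, show κ * t + -(κ * s) = κ * (t - s) from by ring]
  -- assemble
  simp only [mul_zero, neg_zero, Real.exp_zero, one_mul] at hInt
  rw [hY0, hsplit, hIa] at hInt
  have hYt : Y t = S t ω - σ * B t ω := hYeq t ⟨ht0, htT⟩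
  rw [hYt] at hInt
  set E := ∫ s in (0:ℝ)..t, Real.exp (-(κ * s)) * B s ω with hE
  rw [hBI]
  have hexpTt : Real.exp (κ * (T + t)) = Real.exp (κ * t) * Real.exp (κ * T) := by
    rw [← Real.exp_add]; ring_nf
  have hexpTmt : Real.exp (κ * (T - t)) = Real.exp (κ * t) * Real.exp (κ * T - 2 * κ * t) := by
    rw [← Real.exp_add]; ring_nf
  have hexp1 : Real.exp (κ * t) * Real.exp (-(κ * t)) = 1 := by
    rw [← Real.exp_add]; simp
  rw [hexpTt, hexpTmt]
  linear_combination (-(Real.exp (κ * t))) * hInt - (S t ω - σ * B t ω) * hexp1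
end

section
/- Let κ > 0, α > 0, 2α ≠ κ, σ > 0, γ ≥ 0, n > 1, c > 0, β₂ ≥ 0, T > 0. Define v(t, m₁, m₂, V) := ((1+β₂)^{n/(n−1)}/(κ c^{1/(n−1)}))·(1−1/n)²·(e^{κn/(n−1)(T−t)} − 1) + m₁·e^{κ(T−t)} − m₂ − (γ/(2α−κ))·(e^{2α(T−t)} − e^{κ(T−t)})·(V + σ²/(2α)) − (γσ²/(2ακ))·(1 − e^{κ(T−t)}). Then v satisfies ∂_t v + (1+β₂)^{n/(n−1)}·e^{κn/(n−1)(T−t)}/c^{1/(n−1)}·(1−1/n) + κ m₁ e^{κ(T−t)} − (2αγ/(2α−κ))(e^{2α(T−t)} − e^{κ(T−t)})·V − γ e^{κ(T−t)}·V − (γσ²/(2α−κ))(e^{2α(T−t)} − e^{κ(T−t)}) = 0 with terminal condition v(T,m₁,m₂,V) = m₁ − m₂. -/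
open Real Set

/-- The explicit candidate value function
`v(t,m₁,m₂,V) = ((1+β₂)^{n/(n−1)}/(κc^{1/(n−1)}))(1−1/n)²(e^{κn/(n−1)(T−t)} − 1)
 + m₁e^{κ(T−t)} − m₂ − (γ/(2α−κ))(e^{2α(T−t)} − e^{κ(T−t)})(V + σ²/(2α))
 − (γσ²/(2ακ))(1 − e^{κ(T−t)})`
satisfies the (reduced) HJB equation
`∂_t v + (1+β₂)^{n/(n−1)}e^{κn/(n−1)(T−t)}/c^{1/(n−1)}(1−1/n) + κm₁e^{κ(T−t)}
 − (2αγ/(2α−κ))(e^{2α(T−t)} − e^{κ(T−t)})V − γe^{κ(T−t)}V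
 − (γσ²/(2α−κ))(e^{2α(T−t)} − e^{κ(T−t)}) = 0`
with terminal condition `v(T,m₁,m₂,V) = m₁ − m₂`. -/
theorem stmt18 (κ α σ γ n c β₂ T : ℝ)
    (hκ : 0 < κ) (hα : 0 < α) (hne : 2 * α ≠ κ) (hσ : 0 < σ) (hγ : 0 ≤ γ)
    (hn : 1 < n) (hc : 0 < c) (hβ₂ : 0 ≤ β₂) (hT : 0 < T)
    (v : ℝ → ℝ → ℝ → ℝ → ℝ)
    (hv : ∀ t m₁ m₂ V, v t m₁ m₂ V =
      ((1 + β₂) ^ (n / (n - 1)) / (κ * c ^ (1 / (n - 1)))) * (1 - 1 / n) ^ 2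
          * (Real.exp (κ * (n / (n - 1)) * (T - t)) - 1)
        + m₁ * Real.exp (κ * (T - t)) - m₂
        - (γ / (2 * α - κ)) * (Real.exp (2 * α * (T - t)) - Real.exp (κ * (T - t)))
            * (V + σ ^ 2 / (2 * α))
        - (γ * σ ^ 2 / (2 * α * κ)) * (1 - Real.exp (κ * (T - t)))) :
    (∀ (m₁ m₂ V : ℝ), ∀ t ∈ Set.Icc (0 : ℝ) T,
      HasDerivAt (fun s => v s m₁ m₂ V)
        (-((1 + β₂) ^ (n / (n - 1)) * Real.exp (κ * (n / (n - 1)) * (T - t))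
              / c ^ (1 / (n - 1)) * (1 - 1 / n)
            + κ * m₁ * Real.exp (κ * (T - t))
            - (2 * α * γ / (2 * α - κ))
                * (Real.exp (2 * α * (T - t)) - Real.exp (κ * (T - t))) * V
            - γ * Real.exp (κ * (T - t)) * V
            - (γ * σ ^ 2 / (2 * α - κ))
                * (Real.exp (2 * α * (T - t)) - Real.exp (κ * (T - t))))) t) ∧
    (∀ m₁ m₂ V : ℝ, v T m₁ m₂ V = m₁ - m₂) := by

  have hκ' : κ ≠ 0 := hκ.ne'
  have hα' : (2:ℝ) * α ≠ 0 := by positivity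
  have hne' : 2 * α - κ ≠ 0 := sub_ne_zero.mpr hne
  have hn' : n ≠ 0 := by linarith
  have hn1 : n - 1 ≠ 0 := by linarith
  have hQ : c ^ (1 / (n - 1)) ≠ 0 := (Real.rpow_pos_of_pos hc _).ne'
  constructor
  · intro m₁ m₂ V t ht
    have hfun : (fun s => v s m₁ m₂ V) = fun s =>
        ((1 + β₂) ^ (n / (n - 1)) / (κ * c ^ (1 / (n - 1)))) * (1 - 1 / n) ^ 2
            * (Real.exp (κ * (n / (n - 1)) * (T - s)) - 1)
          + m₁ * Real.exp (κ * (T - s)) - m₂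
          - (γ / (2 * α - κ)) * (Real.exp (2 * α * (T - s)) - Real.exp (κ * (T - s)))
              * (V + σ ^ 2 / (2 * α))
          - (γ * σ ^ 2 / (2 * α * κ)) * (1 - Real.exp (κ * (T - s))) := by
      funext s; exact hv s m₁ m₂ V
    rw [hfun]
    have hexp : ∀ a : ℝ, HasDerivAt (fun s : ℝ => Real.exp (a * (T - s)))
        (-a * Real.exp (a * (T - t))) t := by
      intro a
      have h0 : HasDerivAt (fun s : ℝ => a * (T - s)) (a * (-1)) t :=
        ((hasDerivAt_id t).const_sub T).const_mul a
      have := h0.exp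
      convert this using 1
      ring
    have h1 := hexp (κ * (n / (n - 1)))
    have h2 := hexp κ
    have h3 := hexp (2 * α)
    have H :=
      (((((h1.sub_const 1).const_mul
            (((1 + β₂) ^ (n / (n - 1)) / (κ * c ^ (1 / (n - 1)))) * (1 - 1 / n) ^ 2)).add
          (h2.const_mul m₁)).sub_const m₂).sub
          (((h3.sub h2).const_mul (γ / (2 * α - κ))).mul_const (V + σ ^ 2 / (2 * α)))).sub
          (((h2.const_mul (-1)).const_add 1).const_mul (γ * σ ^ 2 / (2 * α * κ)))
    have heq : (fun s : ℝ =>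
        ((1 + β₂) ^ (n / (n - 1)) / (κ * c ^ (1 / (n - 1)))) * (1 - 1 / n) ^ 2
            * (Real.exp (κ * (n / (n - 1)) * (T - s)) - 1)
          + m₁ * Real.exp (κ * (T - s)) - m₂
          - (γ / (2 * α - κ)) * (Real.exp (2 * α * (T - s)) - Real.exp (κ * (T - s)))
              * (V + σ ^ 2 / (2 * α))
          - (γ * σ ^ 2 / (2 * α * κ)) * (1 - Real.exp (κ * (T - s)))) = fun s : ℝ =>
        ((1 + β₂) ^ (n / (n - 1)) / (κ * c ^ (1 / (n - 1)))) * (1 - 1 / n) ^ 2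
            * (Real.exp (κ * (n / (n - 1)) * (T - s)) - 1)
          + m₁ * Real.exp (κ * (T - s)) - m₂
          - γ / (2 * α - κ) * (Real.exp (2 * α * (T - s)) - Real.exp (κ * (T - s)))
              * (V + σ ^ 2 / (2 * α))
          - γ * σ ^ 2 / (2 * α * κ) * (1 + -1 * Real.exp (κ * (T - s))) := by
      funext s; ring
    rw [heq]
    refine H.congr_deriv ?_
    field_simp
    ring
  · intro m₁ m₂ V
    rw [hv]
    simp
end
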